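/- arXiv:1108.0043 — 5 statements merged into one kernel-verified Lean document; each statement's English description precedes it below -/
import Mathlib

section
/- For every nonnegative integer n, every sequence (c_k) of complex numbers and every complex number β, the identity ∑_{m=0}^{n} ∑_{j=0}^{m} c_{2m-j} · (2m-j)!/(j!·(m-j)!·(n-m)!) · 2^j · β^{j+2n-2m} = ∑_{j=0}^{2n} c_{2n-j} · (2n)!/(j!·n!) · β^j holds. -/
open Finset Polynomial

lemma lemA (n K : ℕ) :
    ∑ m ∈ range (n+1), (if m ≤ K then 2 ^ (m - (K - m)) * Nat.choose m (K - m) * Nat.choose n m else 0)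
      = Nat.choose (2*n) K := by
  have hC : (C 2 : Polynomial ℕ) = 2 := by simp
  have h1 : ((X + C 2) * X + 1 : Polynomial ℕ) ^ n = (X + 1) ^ (2 * n) := by
    have h0 : ((X + C 2) * X + 1 : Polynomial ℕ) = (X + 1) ^ 2 := by rw [hC]; ring
    rw [h0, ← pow_mul]
  have h2 := congrArg (fun p => Polynomial.coeff p K) h1
  simp only [coeff_X_add_one_pow, Nat.cast_id] at h2
  rw [← h2, add_pow]
  rw [finset_sum_coeff]
  apply Finset.sum_congr rfl
  intro m hm
  rw [one_pow, mul_one, mul_pow, ← C_eq_natCast, coeff_mul_C, coeff_mul_X_pow',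
    coeff_X_add_C_pow]
  split
  · push_cast; ring
  · simp

/-- The combinatorial identity of Lemma 4.12. -/
theorem stmt_3 (n : ℕ) (c : ℕ → ℂ) (β : ℂ) :
    ∑ m ∈ range (n + 1), ∑ j ∈ range (m + 1),
        c (2 * m - j) *
          ((Nat.factorial (2 * m - j) : ℂ) /
            ((Nat.factorial j : ℂ) * (Nat.factorial (m - j) : ℂ) *
              (Nat.factorial (n - m) : ℂ))) *
          2 ^ j * β ^ (j + 2 * n - 2 * m) =
    ∑ j ∈ range (2 * n + 1),
        c (2 * n - j) *
          ((Nat.factorial (2 * n) : ℂ) /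
            ((Nat.factorial j : ℂ) * (Nat.factorial n : ℂ))) * β ^ j := by
  have hfac : ∀ k : ℕ, ((Nat.factorial k : ℂ)) ≠ 0 := fun k =>
    Nat.cast_ne_zero.2 (Nat.factorial_ne_zero k)
  set g : ℕ → ℕ → ℂ := fun m K =>
    c K * β ^ (2 * n - K) * ((Nat.factorial K : ℂ) / (Nat.factorial n : ℂ)) *
      2 ^ (m - (K - m)) * (Nat.choose m (K - m) : ℂ) * (Nat.choose n m : ℂ) with hg
  -- Step 1: RHS = double sum of g with ite
  have step1 : (∑ j ∈ range (2 * n + 1),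
        c (2 * n - j) * ((Nat.factorial (2 * n) : ℂ) /
            ((Nat.factorial j : ℂ) * (Nat.factorial n : ℂ))) * β ^ j)
      = ∑ m ∈ range (n + 1), ∑ K ∈ range (2 * n + 1), (if m ≤ K then g m K else 0) := by
    rw [Finset.sum_comm]
    rw [← Finset.sum_range_reflect]
    apply Finset.sum_congr rfl
    intro K hK
    rw [Finset.mem_range] at hK
    have h1 : 2 * n + 1 - 1 - K = 2 * n - K := by omega
    have h2 : 2 * n - (2 * n - K) = K := by omega
    rw [h1, h2]
    have hK' : K ≤ 2 * n := by omega
    -- now: c K * ((2n)! / ((2n-K)! * n!)) * β^(2n-K) = ∑ m, ite (m ≤ K) (g m K) 0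
    have hA := lemA n K
    have hA' : ((2*n).choose K : ℂ)
        = ∑ m ∈ range (n+1), (if m ≤ K then
            (2:ℂ) ^ (m - (K - m)) * (Nat.choose m (K - m) : ℂ) * (Nat.choose n m : ℂ) else 0) := by
      rw [← hA]; push_cast; rfl
    have hfact : ((Nat.factorial (2*n) : ℂ) / ((Nat.factorial (2*n - K) : ℂ) * (Nat.factorial n : ℂ)))
        = ((2*n).choose K : ℂ) * ((Nat.factorial K : ℂ) / (Nat.factorial n : ℂ)) := by
      have h := Nat.choose_mul_factorial_mul_factorial hK'
      have hc : ((Nat.factorial (2*n) : ℂ)) = ((2*n).choose K : ℂ) * (Nat.factorial K : ℂ) * (Nat.factorial (2*n-K) : ℂ) := by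
        exact_mod_cast h.symm
      rw [hc, mul_div_assoc, div_mul_cancel_left₀ (hfac (2 * n - K)), div_eq_mul_inv, mul_assoc]
    rw [hfact, hA', Finset.sum_mul, Finset.mul_sum, Finset.sum_mul]
    apply Finset.sum_congr rfl
    intro m hm
    by_cases h : m ≤ K
    · simp only [if_pos h, hg]; ring
    · simp [if_neg h]
  rw [step1]
  -- Step 2: per m, inner sums agree
  apply Finset.sum_congr rfl
  intro m hm
  rw [Finset.mem_range] at hm
  have hmn : m ≤ n := by omega
  -- reduce ite-sum to Ico then range
  have e1 : (∑ K ∈ range (2 * n + 1), (if m ≤ K then g m K else 0))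
      = ∑ K ∈ Finset.Ico m (2 * n + 1), g m K := by
    rw [← Finset.sum_filter]
    congr 1
    ext K
    simp [Nat.lt_succ_iff]
    omega
  have e2 : (∑ K ∈ Finset.Ico m (2 * n + 1), g m K)
      = ∑ i ∈ range (2 * n + 1 - m), g m (m + i) := by
    rw [Finset.sum_Ico_eq_sum_range]
  have e3 : (∑ i ∈ range (2 * n + 1 - m), g m (m + i))
      = ∑ i ∈ range (m + 1), g m (m + i) := by
    symm
    apply Finset.sum_subset
    · apply Finset.range_subset_range.2; omega
    · intro i hi hni
      rw [Finset.mem_range] at hi hni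
      have : m < i := by omega
      rw [hg]
      simp [Nat.add_sub_cancel_left, Nat.choose_eq_zero_of_lt this]
  rw [e1, e2, e3, ← Finset.sum_range_reflect]
  apply Finset.sum_congr rfl
  intro i hi
  rw [Finset.mem_range] at hi
  have hi' : i ≤ m := by omega
  have h1 : m + 1 - 1 - i = m - i := by omega
  rw [h1]
  have h2 : 2 * m - (m - i) = m + i := by omega
  have h3 : m - (m - i) = i := by omega
  have h4 : (m - i) + 2 * n - 2 * m = 2 * n - (m + i) := by omega
  have h5 : m + i - m = i := by omega
  rw [h2, h3, h4, hg]
  simp only [h5]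
  -- per-term identity
  rw [Nat.cast_choose ℂ hi', Nat.cast_choose ℂ hmn]
  have := hfac i; have := hfac (m - i); have := hfac (n - m); have := hfac m; have := hfac n
  field_simp
end

section
/- Fix w₀ ∈ ℂ and Y > 0, and let ω ∈ ℓ²(ℤ₊) be the sequence ω_n = (conj(w₀)·Y)^n / n!. Then ω is a cyclic vector for the right shift operator R on ℓ²(ℤ₊): the linear span of {R^m ω : m ≥ 0} is dense in ℓ²(ℤ₊). -/
/-!
Let `L` be the left shift on `ℓ²`, the adjoint of the right shift `R`, and put `a = w₀ Y`, so
that `ω = (conj a ^ n / n!)ₙ`. If `g` is orthogonal to every `R^m ω`, then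
`0 = ⟪R^m ω, g⟫ = ⟪ω, L^m g⟫ = ∑ₙ aⁿ/n! g(n + m)`, which is the `m`-th coordinate of `exp (a L) g`.
Hence `exp (a L) g = 0`, and since `exp (a L)` is invertible in the Banach algebra of bounded
operators, `g = 0`.
-/

open NormedSpace
open scoped Nat InnerProductSpace

/-- The set of right-shifted copies of a sequence `a ∈ ℓ²(ℤ₊)`:
elements of ℓ² whose entries are those of `a` shifted `m` places to the right. -/
def shiftOrbit (a : lp (fun _ : ℕ => ℂ) 2) : Set (lp (fun _ : ℕ => ℂ) 2) :=
  {f | ∃ m : ℕ, ∀ n : ℕ, f n = if n < m then 0 else a (n - m)}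

namespace lp

section NormedSpace

variable {𝕜 E : Type*} [RCLike 𝕜] [NormedAddCommGroup E]

theorem memℓp_two_nat_add_one_iff {f : ℕ → E} :
    Memℓp (fun n => f (n + 1)) 2 ↔ Memℓp f 2 := by
  simp only [memℓp_gen_iff (by norm_num : 0 < (2 : ENNReal).toReal)]
  exact summable_nat_add_iff (f := fun n => ‖f n‖ ^ (2 : ENNReal).toReal) 1

def rightShift (f : lp (fun _ : ℕ => E) 2) : lp (fun _ : ℕ => E) 2 :=
  ⟨fun | 0 => 0 | n + 1 => f n, memℓp_two_nat_add_one_iff.mp f.2⟩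

@[simp]
theorem rightShift_apply_zero (f : lp (fun _ : ℕ => E) 2) : rightShift f 0 = 0 := rfl

@[simp]
theorem rightShift_apply_succ (f : lp (fun _ : ℕ => E) 2) (n : ℕ) :
    rightShift f (n + 1) = f n := rfl

theorem rightShift_iterate_apply (m : ℕ) (f : lp (fun _ : ℕ => E) 2) (n : ℕ) :
    (rightShift^[m] f) n = if n < m then 0 else f (n - m) := by
  induction m generalizing n with
  | zero => simp
  | succ m ih =>
    rw [Function.iterate_succ_apply']
    cases n with
    | zero => simp
    | succ n => simp [ih]

variable [NormedSpace 𝕜 E]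

variable (𝕜 E) in
noncomputable def leftShift : lp (fun _ : ℕ => E) 2 →L[𝕜] lp (fun _ : ℕ => E) 2 :=
  LinearMap.mkContinuous
    { toFun f := ⟨fun n => f (n + 1), memℓp_two_nat_add_one_iff.mpr f.2⟩
      map_add' _ _ := rfl
      map_smul' _ _ := rfl }
    1 fun f => by
      have hp : 0 < (2 : ENNReal).toReal := by norm_num
      rw [one_mul]
      refine norm_le_of_forall_sum_le hp (norm_nonneg f) fun s => ?_
      convert sum_rpow_le_norm_rpow hp f (s.map (addRightEmbedding 1)) using 1
      simp only [Finset.sum_map, addRightEmbedding_apply]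
      rfl

@[simp]
theorem leftShift_apply (f : lp (fun _ : ℕ => E) 2) (n : ℕ) : leftShift 𝕜 E f n = f (n + 1) :=
  rfl

theorem leftShift_pow_apply (k : ℕ) (f : lp (fun _ : ℕ => E) 2) (n : ℕ) :
    ((leftShift 𝕜 E ^ k) f) n = f (n + k) := by
  induction k generalizing f with
  | zero => rfl
  | succ k ih => rw [pow_succ]; exact ih _

variable [CompleteSpace E]

theorem hasSum_exp_smul_leftShift_apply (a : 𝕜) (f : lp (fun _ : ℕ => E) 2) (m : ℕ) :
    HasSum (fun n => (a ^ n / n !) • f (n + m)) (exp (a • leftShift 𝕜 E) f m) := by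
  have h := (exp_series_hasSum_exp' (𝕂 := 𝕜) (a • leftShift 𝕜 E)).mapL
    ((evalCLM 𝕜 _ 2 m).comp (ContinuousLinearMap.apply 𝕜 _ f))
  convert h using 2 with n
  · change _ = ((n !⁻¹ : 𝕜) • (a • leftShift 𝕜 E) ^ n) f m
    rw [smul_pow, smul_smul, smul_apply, coeFn_smul, Pi.smul_apply, leftShift_pow_apply,
      add_comm m, div_eq_inv_mul]
  · rfl

theorem eq_zero_of_forall_tsum_smul_eq_zero (a : 𝕜) {f : lp (fun _ : ℕ => E) 2}
    (hf : ∀ m, ∑' n, (a ^ n / n !) • f (n + m) = 0) : f = 0 := by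
  have hexp : exp (a • leftShift 𝕜 E) f = 0 := by
    ext m
    rw [← (hasSum_exp_smul_leftShift_apply a f m).tsum_eq, hf m]
    rfl
  have hunit : IsUnit (exp (a • leftShift 𝕜 E)) :=
    isUnit_exp_of_mem_ball (𝕂 := 𝕜)
      ((expSeries_radius_eq_top 𝕜 (lp (fun _ : ℕ => E) 2 →L[𝕜] lp (fun _ : ℕ => E) 2)).symm ▸
        edist_lt_top _ _)
  have hinj := ((Module.End.isUnit_iff _).mp
    (hunit.map ContinuousLinearMap.toLinearMapRingHom)).injective
  exact hinj (hexp.trans (map_zero _).symm)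

end NormedSpace

section InnerProductSpace

variable {𝕜 E : Type*} [RCLike 𝕜] [NormedAddCommGroup E] [InnerProductSpace 𝕜 E]

theorem inner_rightShift (f g : lp (fun _ : ℕ => E) 2) :
    ⟪rightShift f, g⟫_𝕜 = ⟪f, leftShift 𝕜 E g⟫_𝕜 := by
  rw [inner_eq_tsum, inner_eq_tsum, (summable_inner (𝕜 := 𝕜) (rightShift f) g).tsum_eq_zero_add]
  simp only [rightShift_apply_zero, inner_zero_left, zero_add, rightShift_apply_succ,
    leftShift_apply]

theorem inner_rightShift_iterate (m : ℕ) (f g : lp (fun _ : ℕ => E) 2) :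
    ⟪rightShift^[m] f, g⟫_𝕜 = ⟪f, (leftShift 𝕜 E ^ m) g⟫_𝕜 := by
  induction m generalizing f with
  | zero => rfl
  | succ m ih => rw [Function.iterate_succ_apply, ih, inner_rightShift, pow_succ']; rfl

end InnerProductSpace

end lp

theorem stmt_8_general (w₀ : ℂ) (Y : ℝ)
    (ω : lp (fun _ : ℕ => ℂ) 2)
    (hω : ∀ n : ℕ, ω n = ((starRingEnd ℂ) w₀ * (Y : ℂ)) ^ n / (Nat.factorial n : ℂ)) :
    Dense ((Submodule.span ℂ (shiftOrbit ω) : Submodule ℂ (lp (fun _ : ℕ => ℂ) 2)) :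
      Set (lp (fun _ : ℕ => ℂ) 2)) := by
  rw [Submodule.dense_iff_topologicalClosure_eq_top, Submodule.topologicalClosure_eq_top_iff,
    Submodule.eq_bot_iff]
  intro g hg
  have horth (m : ℕ) : ⟪ω, (lp.leftShift ℂ ℂ ^ m) g⟫_ℂ = 0 := by
    rw [← lp.inner_rightShift_iterate]
    exact (Submodule.mem_orthogonal _ g).mp hg _
      (Submodule.subset_span ⟨m, lp.rightShift_iterate_apply m ω⟩)
  refine lp.eq_zero_of_forall_tsum_smul_eq_zero (w₀ * Y) fun m => ?_
  rw [← horth m, lp.inner_eq_tsum]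
  congr with n
  rw [lp.leftShift_pow_apply]
  simp [hω, mul_comm]

/-- The sequence ωₙ = (conj(w₀)·Y)ⁿ/n! is a cyclic vector for the right shift on ℓ²(ℤ₊). -/
theorem stmt_8 (w₀ : ℂ) (Y : ℝ) (hY : 0 < Y)
    (ω : lp (fun _ : ℕ => ℂ) 2)
    (hω : ∀ n : ℕ, ω n = ((starRingEnd ℂ) w₀ * (Y : ℂ)) ^ n / (Nat.factorial n : ℂ)) :
    Dense ((Submodule.span ℂ (shiftOrbit ω) : Submodule ℂ (lp (fun _ : ℕ => ℂ) 2)) :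
      Set (lp (fun _ : ℕ => ℂ) 2)) :=
  stmt_8_general w₀ Y ω hω
end

section
/- Let ν : H² → ℂ be a bounded linear functional such that ν(f) ≠ 0 for every outer function f ∈ H². Then there exist z₀ ∈ 𝔻 and σ ∈ ℂ \ {0} such that ν(f) = σ·f(z₀) for all f ∈ H². -/
/-!
Write `cₙ = ν(zⁿ)`, so that `ν(e^{wz}) = F(w) := ∑ cₙ wⁿ / n!` and `ν(z e^{wz}) = F'(w)`. For
`|t| < 1` the function `(1 + tz) e^{wz}` is outer, since its reciprocal `e^{-wz} / (1 + tz)` has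
absolutely summable Taylor coefficients. Hence `F(w) + t F'(w) ≠ 0` whenever `|t| < 1`, that is,
`F` has no zeros and `|F'| ≤ |F|`. By Liouville `F' = βF`, so `cₙ = βⁿ c₀`; and `|β| < 1` because
`ν(zⁿ) → 0`. Thus `ν(f) = c₀ ∑ aₙ βⁿ = c₀ f(β)`.
-/

open Metric

/-- Outer functions in H², identified with their ℓ² coefficient sequences:
the span of the right shifts of the coefficient sequence is dense. -/
def OuterSeq (a : lp (fun _ : ℕ => ℂ) 2) : Prop :=
  Dense ((Submodule.span ℂ (shiftOrbit a) : Submodule ℂ (lp (fun _ : ℕ => ℂ) 2)) :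
    Set (lp (fun _ : ℕ => ℂ) 2))

open Filter Topology PowerSeries
open scoped ENNReal lp

section Functional

variable {ι 𝕜 : Type*} [DecidableEq ι]

section NormedField

variable [NontriviallyNormedField 𝕜] {p : ℝ≥0∞} [Fact (1 ≤ p)]

theorem ContinuousLinearMap.hasSum_mul_apply_single (hp : p ≠ ⊤)
    (ν : lp (fun _ : ι => 𝕜) p →L[𝕜] 𝕜) (a : lp (fun _ : ι => 𝕜) p) :
    HasSum (fun i => a i * ν (lp.single p i 1)) (ν a) := by
  convert (lp.hasSum_single hp a).mapL ν using 2 with i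
  rw [← smul_eq_mul, ← map_smul, ← lp.single_smul, smul_eq_mul, mul_one]

theorem ContinuousLinearMap.norm_apply_single_le (ν : lp (fun _ : ι => 𝕜) p →L[𝕜] 𝕜) (i : ι) :
    ‖ν (lp.single p i 1)‖ ≤ ‖ν‖ := by
  simpa [lp.norm_single (zero_lt_one.trans_le Fact.out)] using ν.le_opNorm (lp.single p i 1)

end NormedField

theorem ContinuousLinearMap.tendsto_apply_single_cofinite [RCLike 𝕜] (ν : ℓ²(ι, 𝕜) →L[𝕜] 𝕜) :
    Tendsto (fun i => ν (lp.single 2 i 1)) cofinite (𝓝 0) := by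
  obtain ⟨v, rfl⟩ := (InnerProductSpace.toDual 𝕜 ℓ²(ι, 𝕜)).surjective ν
  have hsq : Summable fun i => ‖v i‖ ^ 2 := by
    simpa using (lp.memℓp v).summable (by norm_num : 0 < (2 : ℝ≥0∞).toReal)
  have hv : Tendsto (fun i => ‖v i‖) cofinite (𝓝 0) := by
    simpa [Real.sqrt_sq (norm_nonneg _)] using hsq.tendsto_cofinite_zero.sqrt
  simpa [lp.inner_single_right, tendsto_zero_iff_norm_tendsto_zero] using hv

end Functional

section Shift

variable {E : Type*} [NormedAddCommGroup E]

/-- Multiplication by `z ^ m` on `H²`. -/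
def lp.shiftBy (m : ℕ) (a : ℓ²(ℕ, E)) : ℓ²(ℕ, E) :=
  ⟨fun n => if n < m then 0 else a (n - m), memℓp_gen <| (summable_nat_add_iff m).mp <| by
    simpa using (lp.memℓp a).summable (by norm_num : 0 < (2 : ℝ≥0∞).toReal)⟩

theorem lp.shiftBy_apply (m : ℕ) (a : ℓ²(ℕ, E)) (n : ℕ) :
    lp.shiftBy m a n = if n < m then 0 else a (n - m) := rfl

theorem lp.norm_shiftBy (m : ℕ) (a : ℓ²(ℕ, E)) : ‖lp.shiftBy m a‖ = ‖a‖ := by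
  have h2 : 0 < (2 : ℝ≥0∞).toReal := by norm_num
  have hsum := (lp.memℓp (lp.shiftBy m a)).summable h2
  rw [← Real.rpow_left_inj (norm_nonneg _) (norm_nonneg _) h2.ne', lp.norm_rpow_eq_tsum h2,
    lp.norm_rpow_eq_tsum h2, ← hsum.sum_add_tsum_nat_add m]
  simp +contextual [lp.shiftBy_apply, Finset.sum_eq_zero]

theorem lp.shiftBy_mem_shiftOrbit (m : ℕ) (a : ℓ²(ℕ, ℂ)) : lp.shiftBy m a ∈ shiftOrbit a :=
  ⟨m, fun _ => rfl⟩

end Shift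

section Outer

theorem lp.hasSum_coeff_mul_shiftBy_apply {a : ℓ²(ℕ, ℂ)} {D : ℂ⟦X⟧} (h : D * mk ⇑a = 1) (m n : ℕ) :
    HasSum (fun j => coeff j D * lp.shiftBy (j + m) a n) (if n = m then 1 else 0) := by
  rcases lt_or_ge n m with hnm | hnm
  · simp [lp.shiftBy_apply, hnm.ne, show ∀ j, n < j + m by omega, hasSum_zero]
  obtain ⟨k, rfl⟩ := Nat.exists_eq_add_of_le' hnm
  have hshift : ∀ j, lp.shiftBy (j + m) a (k + m) = if k < j then 0 else a (k - j) := fun j => by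
    simp [lp.shiftBy_apply, Nat.add_sub_add_right]
  have hk : (if k + m = m then (1 : ℂ) else 0) = coeff k (D * mk ⇑a) := by
    simp [h, coeff_one]
  rw [hk, coeff_mul, Finset.Nat.sum_antidiagonal_eq_sum_range_succ
    (fun i j => coeff i D * coeff j (mk ⇑a))]
  simp only [hshift, coeff_mk]
  have hsupp : ∀ j ∉ Finset.range (k + 1), coeff j D * (if k < j then 0 else a (k - j)) = 0 :=
    fun j hj => by simp [show k < j by simpa [Nat.lt_succ_iff] using hj]
  convert hasSum_sum_of_ne_finset_zero (L := .unconditional ℕ) hsupp using 1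
  exact Finset.sum_congr rfl fun j hj => by simp [Nat.lt_succ_iff.mp (Finset.mem_range.mp hj)]

theorem lp.hasSum_smul_shiftBy {a : ℓ²(ℕ, ℂ)} {D : ℂ⟦X⟧} (hD : Summable fun n => ‖coeff n D‖)
    (h : D * mk ⇑a = 1) (m : ℕ) :
    HasSum (fun j => coeff j D • lp.shiftBy (j + m) a) (lp.single 2 m 1) := by
  obtain ⟨x, hx⟩ : Summable fun j => coeff j D • lp.shiftBy (j + m) a :=
    .of_norm (by simpa [norm_smul, lp.norm_shiftBy] using hD.mul_right ‖a‖)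
  convert hx
  ext n
  rw [lp.single_apply, Pi.single_apply]
  refine (lp.hasSum_coeff_mul_shiftBy_apply h m n).unique ?_
  exact hx.mapL (lp.evalCLM ℂ (fun _ => ℂ) 2 n)

theorem outerSeq_of_mul_eq_one {a : ℓ²(ℕ, ℂ)} {D : ℂ⟦X⟧} (hD : Summable fun n => ‖coeff n D‖)
    (h : D * mk ⇑a = 1) : OuterSeq a := by
  set T := Submodule.span ℂ (shiftOrbit a)
  set S := T.topologicalClosure
  have mem_of_hasSum {f : ℕ → ℓ²(ℕ, ℂ)} {x : ℓ²(ℕ, ℂ)} (hf : HasSum f x) (hS : ∀ n, f n ∈ S) :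
      x ∈ S :=
    T.isClosed_topologicalClosure.mem_of_tendsto hf.tendsto_sum_nat
      (.of_forall fun _ => S.sum_mem fun n _ => hS n)
  have hsingle (m : ℕ) : lp.single 2 m (1 : ℂ) ∈ S :=
    mem_of_hasSum (lp.hasSum_smul_shiftBy hD h m) fun j => S.smul_mem _ <|
      Submodule.le_topologicalClosure _ <| Submodule.subset_span (lp.shiftBy_mem_shiftOrbit _ a)
  rw [OuterSeq, Submodule.dense_iff_topologicalClosure_eq_top, eq_top_iff]
  intro x _
  refine mem_of_hasSum (lp.hasSum_single (by norm_num) x) fun n => ?_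
  simpa [← lp.single_smul] using S.smul_mem (x n) (hsingle n)

end Outer

section Borel

noncomputable def borelTransform (c : ℕ → ℂ) (w : ℂ) : ℂ := ∑' n, c n * w ^ n / n.factorial

variable {c : ℕ → ℂ} {C : ℝ}

theorem norm_borelTransform_term_le (hc : ∀ n, ‖c n‖ ≤ C) {w : ℂ} {r : ℝ} (hw : ‖w‖ ≤ r) (n : ℕ) :
    ‖c n * w ^ n / n.factorial‖ ≤ C * (r ^ n / n.factorial) := by
  rw [norm_div, norm_mul, norm_pow, Complex.norm_natCast, mul_div_assoc]
  gcongr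
  · exact (norm_nonneg _).trans (hc n)
  · exact hc n

theorem summable_borelTransform (hc : ∀ n, ‖c n‖ ≤ C) (w : ℂ) :
    Summable fun n => c n * w ^ n / n.factorial :=
  .of_norm_bounded ((Real.summable_pow_div_factorial ‖w‖).mul_left C)
    (norm_borelTransform_term_le hc le_rfl)

theorem borelTransform_apply_zero (c : ℕ → ℂ) : borelTransform c 0 = c 0 := by
  rw [borelTransform, tsum_eq_single 0 fun n hn => by simp [hn]]
  simp

theorem hasDerivAt_borelTransform (hc : ∀ n, ‖c n‖ ≤ C) (w : ℂ) :
    HasDerivAt (borelTransform c) (borelTransform (fun n => c (n + 1)) w) w := by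
  have hsplit : borelTransform c =
      fun y => c 0 + ∑' n, c (n + 1) * y ^ (n + 1) / (n + 1).factorial :=
    funext fun y => by simp [borelTransform, (summable_borelTransform hc y).tsum_eq_zero_add]
  rw [hsplit]
  have hw : w ∈ ball (0 : ℂ) (‖w‖ + 1) := by simp
  refine .const_add _ <| hasDerivAt_tsum_of_isPreconnected
    (g' := fun n y => c (n + 1) * y ^ n / n.factorial)
    ((Real.summable_pow_div_factorial (‖w‖ + 1)).mul_left C) isOpen_ball
    (convex_ball _ _).isPreconnected (fun n y _ => ?_)
    (fun n y hy => norm_borelTransform_term_le (fun n => hc (n + 1)) (mem_ball_zero_iff.1 hy).le n)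
    hw ((summable_nat_add_iff 1).mpr (summable_borelTransform hc w)) hw
  refine (((hasDerivAt_pow (n + 1) y).const_mul (c (n + 1))).div_const _).congr_deriv ?_
  rw [Nat.add_sub_cancel, Nat.factorial_succ]
  push_cast
  field_simp

theorem differentiable_borelTransform (hc : ∀ n, ‖c n‖ ≤ C) :
    Differentiable ℂ (borelTransform c) :=
  fun w => (hasDerivAt_borelTransform hc w).differentiableAt

end Borel

theorem eq_pow_mul_of_borelTransform_shift_eq {c : ℕ → ℂ} {C : ℝ} (hc : ∀ n, ‖c n‖ ≤ C) {β : ℂ}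
    (h : ∀ w, borelTransform (fun n => c (n + 1)) w = β * borelTransform c w) (k : ℕ) :
    c k = β ^ k * c 0 := by
  have key (k : ℕ) : borelTransform (fun n => c (n + k)) = fun w => β ^ k * borelTransform c w := by
    induction k with
    | zero => funext w; simp
    | succ k ih =>
      funext w
      have hk := hasDerivAt_borelTransform (c := fun n => c (n + k)) (fun n => hc _) w
      rw [ih] at hk
      have h' := hk.unique ((hasDerivAt_borelTransform hc w).const_mul (β ^ k))
      simp only [Nat.add_right_comm _ 1 k] at h'
      simp only [← add_assoc, h', h, pow_succ, mul_assoc]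
  simpa [borelTransform_apply_zero] using congr_fun (key k) 0

theorem Differentiable.exists_eq_mul_of_norm_le {E : Type*} [NormedAddCommGroup E]
    [NormedSpace ℂ E] {f g : E → ℂ} (hf : Differentiable ℂ f) (hg : Differentiable ℂ g)
    (hg0 : ∀ z, g z ≠ 0) (hfg : ∀ z, ‖f z‖ ≤ ‖g z‖) : ∃ β, ∀ z, f z = β * g z := by
  have hq : Differentiable ℂ fun z => f z / g z := by
    simpa only [div_eq_mul_inv] using hf.fun_mul (hg.fun_inv hg0)
  have hb : Bornology.IsBounded (Set.range fun z => f z / g z) := by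
    refine isBounded_iff_forall_norm_le.2 ⟨1, ?_⟩
    rintro _ ⟨z, rfl⟩
    rw [norm_div]
    exact div_le_one_of_le₀ (hfg z) (norm_nonneg _)
  refine ⟨f 0 / g 0, fun z => ?_⟩
  rw [← hq.apply_eq_apply_of_bounded hb z 0, div_mul_cancel₀ _ (hg0 z)]

theorem norm_le_norm_of_forall_add_mul_ne_zero {𝕜 : Type*} [NormedField 𝕜] {x y : 𝕜}
    (h : ∀ t : 𝕜, ‖t‖ < 1 → x + t * y ≠ 0) : ‖y‖ ≤ ‖x‖ := by
  by_contra! hlt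
  have hy : y ≠ 0 := norm_pos_iff.mp ((norm_nonneg x).trans_lt hlt)
  refine h (-(x / y)) ?_ ?_
  · rw [norm_neg, norm_div, div_lt_one (norm_pos_iff.mpr hy)]
    exact hlt
  · field_simp
    ring

section ExpFamily

theorem summable_norm_coeff_mul {R : Type*} [NormedRing R] {A B : R⟦X⟧}
    (hA : Summable fun n => ‖coeff n A‖) (hB : Summable fun n => ‖coeff n B‖) :
    Summable fun n => ‖coeff n (A * B)‖ :=
  .of_nonneg_of_le (fun _ => norm_nonneg _) (fun n => by rw [coeff_mul])
    (summable_norm_sum_mul_antidiagonal_of_summable_norm hA hB)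

theorem summable_norm_coeff_rescale_exp (w : ℂ) :
    Summable fun n => ‖coeff n (rescale w (exp ℂ))‖ := by
  simpa [coeff_rescale, coeff_exp, div_eq_mul_inv] using Real.summable_pow_div_factorial ‖w‖

theorem summable_norm_coeff_rescale_mk_one {t : ℂ} (ht : ‖t‖ < 1) :
    Summable fun n => ‖coeff n (rescale t (mk 1 : ℂ⟦X⟧))‖ := by
  simpa [coeff_rescale] using summable_geometric_of_lt_one (norm_nonneg t) ht

noncomputable def lp.expVec (w : ℂ) : ℓ²(ℕ, ℂ) :=
  ⟨fun n => coeff n (rescale w (exp ℂ)),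
    .of_exponent_ge (memℓp_gen (by simpa using summable_norm_coeff_rescale_exp w)) one_le_two⟩

theorem lp.expVec_apply (w : ℂ) (n : ℕ) : lp.expVec w n = coeff n (rescale w (exp ℂ)) := rfl

theorem lp.mk_expVec_add_smul_shiftBy_one (w t : ℂ) :
    mk ⇑(lp.expVec w + t • lp.shiftBy 1 (lp.expVec w)) = (1 + C t * X) * rescale w (exp ℂ) := by
  ext n
  rw [coeff_mk]
  change lp.expVec w n + t * lp.shiftBy 1 (lp.expVec w) n = _
  rcases n with _ | n <;> simp [-coeff_zero_eq_constantCoeff, coeff_zero_X_mul, coeff_succ_X_mul,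
    lp.expVec_apply, lp.shiftBy_apply, add_mul, mul_assoc]

theorem outerSeq_expVec_add_smul_shiftBy_one (w : ℂ) {t : ℂ} (ht : ‖t‖ < 1) :
    OuterSeq (lp.expVec w + t • lp.shiftBy 1 (lp.expVec w)) := by
  refine outerSeq_of_mul_eq_one (D := rescale (-w) (exp ℂ) * rescale (-t) (mk 1))
    (summable_norm_coeff_mul (summable_norm_coeff_rescale_exp _)
      (summable_norm_coeff_rescale_mk_one (by rwa [norm_neg]))) ?_
  have hgeom : rescale (-t) (mk 1 : ℂ⟦X⟧) * (1 + C t * X) = 1 := by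
    simpa [rescale_X, sub_eq_add_neg] using congr_arg (rescale (-t)) (mk_one_mul_one_sub_eq_one ℂ)
  rw [lp.mk_expVec_add_smul_shiftBy_one, show ∀ a b c d : ℂ⟦X⟧, a * b * (c * d) = a * d * (b * c)
    by intros; ring, exp_mul_exp_eq_exp_add, neg_add_cancel, hgeom]
  simp

end ExpFamily

namespace ContinuousLinearMap

variable (ν : ℓ²(ℕ, ℂ) →L[ℂ] ℂ)

theorem hasSum_mul_apply_single_succ (x : ℓ²(ℕ, ℂ)) :
    HasSum (fun n => x n * ν (lp.single 2 (n + 1) 1)) (ν (lp.shiftBy 1 x)) := by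
  have h := ν.hasSum_mul_apply_single (by norm_num) (lp.shiftBy 1 x)
  rw [← hasSum_nat_add_iff' 1] at h
  simpa [lp.shiftBy_apply] using h

theorem apply_expVec_add_smul_shiftBy_one (w t : ℂ) :
    ν (lp.expVec w + t • lp.shiftBy 1 (lp.expVec w)) =
      borelTransform (fun n => ν (lp.single 2 n 1)) w +
        t * borelTransform (fun n => ν (lp.single 2 (n + 1) 1)) w := by
  have hexp (n : ℕ) (z : ℂ) : lp.expVec w n * z = z * w ^ n / n.factorial := by
    simp [lp.expVec_apply, coeff_rescale, coeff_exp]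
    ring
  rw [map_add, map_smul, smul_eq_mul, ← (ν.hasSum_mul_apply_single (by norm_num) _).tsum_eq,
    ← (ν.hasSum_mul_apply_single_succ _).tsum_eq, borelTransform, borelTransform]
  simp only [hexp]

end ContinuousLinearMap

/-- A bounded linear functional on H² that is non-vanishing on outer functions is a
non-zero multiple of evaluation at a point of the open unit disk. -/
theorem stmt_11 (ν : lp (fun _ : ℕ => ℂ) 2 →L[ℂ] ℂ)
    (h : ∀ a : lp (fun _ : ℕ => ℂ) 2, OuterSeq a → ν a ≠ 0) :
    ∃ z₀ ∈ ball (0:ℂ) 1, ∃ σ : ℂ, σ ≠ 0 ∧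
      ∀ a : lp (fun _ : ℕ => ℂ) 2, ν a = σ * ∑' n : ℕ, a n * z₀ ^ n := by
  set c : ℕ → ℂ := fun n => ν (lp.single 2 n 1)
  have hc : ∀ n, ‖c n‖ ≤ ‖ν‖ := ν.norm_apply_single_le
  have hν (w t : ℂ) (ht : ‖t‖ < 1) :
      borelTransform c w + t * borelTransform (fun n => c (n + 1)) w ≠ 0 := by
    rw [← ν.apply_expVec_add_smul_shiftBy_one]
    exact h _ (outerSeq_expVec_add_smul_shiftBy_one w ht)
  have hF (w : ℂ) : borelTransform c w ≠ 0 := by simpa using hν w 0 (by simp)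
  obtain ⟨β, hβ⟩ := (differentiable_borelTransform fun n => hc (n + 1)).exists_eq_mul_of_norm_le
    (differentiable_borelTransform hc) hF fun w => norm_le_norm_of_forall_add_mul_ne_zero (hν w)
  have hgeom := eq_pow_mul_of_borelTransform_shift_eq hc hβ
  have hc0 : c 0 ≠ 0 := by simpa [borelTransform_apply_zero] using hF 0
  have hβ1 : ‖β‖ < 1 := by
    refine tendsto_pow_atTop_nhds_zero_iff_norm_lt_one.mp ?_
    have h0 := ν.tendsto_apply_single_cofinite.div_const (c 0)
    have hdiv : (fun k => c k / c 0) = fun k => β ^ k :=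
      funext fun k => by rw [hgeom k, mul_div_cancel_right₀ _ hc0]
    rwa [Nat.cofinite_eq_atTop, zero_div, hdiv] at h0
  refine ⟨β, mem_ball_zero_iff.2 hβ1, c 0, hc0, fun a => ?_⟩
  rw [← (ν.hasSum_mul_apply_single (by norm_num) a).tsum_eq, ← tsum_mul_left]
  refine tsum_congr fun n => ?_
  change a n * c n = _
  rw [hgeom n]
  ring
end

section
/- Let Ω ⊆ 𝔻 be a nonempty connected open set, and let A : ℂ[z] → 𝒜(𝔻) be a nonzero linear map with A(𝒫(𝔻)) ⊆ 𝒮(Ω) ∪ {0}. If A(1) = 0 (the zeroth moment vanishes identically), then A has rank 1: there exists φ ∈ 𝒜(𝔻) with A(p) ∈ ℂ·φ for every polynomial p. -/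
open Metric Polynomial

/-- If a nonzero linear map A : ℂ[z] → 𝒜(𝔻) maps 𝔻-stable polynomials into
Ω-stable functions or 0, and A(1) vanishes identically, then A has rank 1. -/
theorem stmt_14 (Ω : Set ℂ) (hΩsub : Ω ⊆ ball (0:ℂ) 1) (hΩne : Ω.Nonempty)
    (hΩopen : IsOpen Ω) (hΩconn : IsConnected Ω)
    (A : Polynomial ℂ →ₗ[ℂ] (ℂ → ℂ))
    (hA : ∀ p : Polynomial ℂ, DifferentiableOn ℂ (A p) (ball (0:ℂ) 1))
    (hstab : ∀ p : Polynomial ℂ, (∀ z ∈ ball (0:ℂ) 1, Polynomial.eval z p ≠ 0) →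
      ((∀ z ∈ ball (0:ℂ) 1, A p z = 0) ∨ (∀ z ∈ Ω, A p z ≠ 0)))
    (hA0 : ∃ p : Polynomial ℂ, ∃ z ∈ ball (0:ℂ) 1, A p z ≠ 0)
    (h1 : ∀ z ∈ ball (0:ℂ) 1, A 1 z = 0) :
    ∃ φ : ℂ → ℂ, DifferentiableOn ℂ φ (ball (0:ℂ) 1) ∧
      ∀ p : Polynomial ℂ, ∃ cst : ℂ, ∀ z ∈ ball (0:ℂ) 1, A p z = cst * φ z := by
  obtain ⟨z0, hz0⟩ := hΩne
  have hz0b : z0 ∈ ball (0:ℂ) 1 := hΩsub hz0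
  -- representation of A p via moments
  have hrepr : ∀ (p : Polynomial ℂ) (z : ℂ),
      A p z = ∑ k ∈ p.support, p.coeff k * A (X ^ k) z := by
    intro p z
    conv_lhs => rw [← Polynomial.sum_C_mul_X_pow_eq p]
    rw [Polynomial.sum_def, map_sum, Finset.sum_apply]
    refine Finset.sum_congr rfl fun k _ => ?_
    rw [← Polynomial.smul_eq_C_mul, map_smul]
    simp
  -- basic nonvanishing of z^k - c in the ball
  have hpow : ∀ (k : ℕ) (c z : ℂ), 1 ≤ k → 1 ≤ ‖c‖ → ‖z‖ < 1 → z ^ k - c ≠ 0 := by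
    intro k c z hk hc hz h
    have hzk : ‖z ^ k‖ < 1 := by
      rw [norm_pow]
      calc ‖z‖ ^ k ≤ ‖z‖ ^ 1 := pow_le_pow_of_le_one (norm_nonneg z) hz.le hk
      _ < 1 := by simpa using hz
    rw [sub_eq_zero] at h
    rw [h] at hzk
    linarith
  -- stability of the quadratic-type products
  have hstable : ∀ (m n : ℕ) (a b : ℂ), 1 ≤ m → 1 ≤ n → 1 ≤ ‖a‖ → 1 ≤ ‖b‖ →
      ∀ z ∈ ball (0:ℂ) 1, eval z ((X^m - C a) * (X^n - C b)) ≠ 0 := by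
    intro m n a b hm hn ha hb z hz
    rw [mem_ball_zero_iff] at hz
    simp only [eval_mul, eval_sub, eval_pow, eval_X, eval_C]
    exact mul_ne_zero (hpow m a z hm ha hz) (hpow n b z hn hb hz)
  -- expansion of A on the products
  have hAexp : ∀ (m n : ℕ) (a b : ℂ) (z : ℂ), z ∈ ball (0:ℂ) 1 →
      A ((X^m - C a) * (X^n - C b)) z
        = A (X^(m+n)) z - a * A (X^n) z - b * A (X^m) z := by
    intro m n a b z hz
    have hid : (X^m - C a) * (X^n - C b)
        = X^(m+n) - a • X^n - b • X^m + (a*b) • (1 : Polynomial ℂ) := by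
      simp only [Polynomial.smul_eq_C_mul, C_mul, mul_one]
      ring
    rw [hid, map_add, map_sub, map_sub, map_smul, map_smul, map_smul]
    simp only [Pi.add_apply, Pi.sub_apply, Pi.smul_apply, smul_eq_mul]
    rw [h1 z hz]
    ring
  -- dichotomy for single moments
  have hdich : ∀ k : ℕ, 1 ≤ k →
      (∀ z ∈ ball (0:ℂ) 1, A (X^k) z = 0) ∨ (∀ z ∈ Ω, A (X^k) z ≠ 0) := by
    intro k hk
    have hst : ∀ z ∈ ball (0:ℂ) 1, eval z (X^k - C (2:ℂ)) ≠ 0 := by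
      intro z hz
      rw [mem_ball_zero_iff] at hz
      simp only [eval_sub, eval_pow, eval_X, eval_C]
      exact hpow k 2 z hk (by norm_num) hz
    have hval : ∀ z ∈ ball (0:ℂ) 1, A (X^k - C 2) z = A (X^k) z := by
      intro z hz
      have hid : (X^k - C (2:ℂ)) = X^k - (2:ℂ) • (1 : Polynomial ℂ) := by
        simp [Polynomial.smul_eq_C_mul]
      rw [hid, map_sub, map_smul]
      simp [h1 z hz]
    rcases hstab _ hst with h | h
    · left; intro z hz; rw [← hval z hz]; exact h z hz
    · right; intro z hz; rw [← hval z (hΩsub hz)]; exact h z hz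
  -- pairwise proportionality of moments
  have hpair : ∀ m n : ℕ, 1 ≤ m → 1 ≤ n →
      (¬ ∀ z ∈ ball (0:ℂ) 1, A (X^m) z = 0) →
      ∃ c : ℂ, ∀ z ∈ ball (0:ℂ) 1, A (X^n) z = c * A (X^m) z := by
    intro m n hm hn hmne
    by_cases hn0 : ∀ z ∈ ball (0:ℂ) 1, A (X^n) z = 0
    · exact ⟨0, fun z hz => by rw [hn0 z hz, zero_mul]⟩
    have hmΩ : ∀ z ∈ Ω, A (X^m) z ≠ 0 := (hdich m hm).resolve_left hmne
    have hnΩ : ∀ z ∈ Ω, A (X^n) z ≠ 0 := (hdich n hn).resolve_left hn0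
    set u : ℂ := A (X^n) z0 with hu
    set v : ℂ := A (X^m) z0 with hv
    set w : ℂ := A (X^(m+n)) z0 with hw
    have hune : u ≠ 0 := hnΩ z0 hz0
    have hvne : v ≠ 0 := hmΩ z0 hz0
    have hvpos : (0:ℝ) < ‖v‖ := norm_pos_iff.mpr hvne
    have hupos : (0:ℝ) < ‖u‖ := norm_pos_iff.mpr hune
    set T : ℝ := max 1 ((‖u‖ + ‖w‖) / ‖v‖) with hT
    have hT1 : (1:ℝ) ≤ T := le_max_left _ _
    have key : ∀ t : ℝ, T ≤ t → ∃ a : ℂ, a * u = w - (t:ℂ) * v ∧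
        ∀ z ∈ ball (0:ℂ) 1,
          A (X^(m+n)) z - a * A (X^n) z - (t:ℂ) * A (X^m) z = 0 := by
      intro t ht
      have ht1 : (1:ℝ) ≤ t := le_trans hT1 ht
      refine ⟨(w - (t:ℂ) * v) / u, div_mul_cancel₀ _ hune, ?_⟩
      have hau : (w - (t:ℂ) * v) / u * u = w - (t:ℂ) * v := div_mul_cancel₀ _ hune
      have hbnorm : 1 ≤ ‖((t:ℝ):ℂ)‖ := by
        rw [Complex.norm_real, Real.norm_eq_abs, abs_of_nonneg (by linarith)]
        exact ht1
      have hanorm : 1 ≤ ‖(w - (t:ℂ) * v) / u‖ := by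
        rw [norm_div, le_div_iff₀ hupos, one_mul]
        have h1' : ‖(t:ℂ) * v‖ - ‖w‖ ≤ ‖w - (t:ℂ) * v‖ := by
          rw [norm_sub_rev]; exact norm_sub_norm_le _ _
        have h2' : ‖(t:ℂ) * v‖ = t * ‖v‖ := by
          rw [norm_mul, Complex.norm_real, Real.norm_eq_abs,
            abs_of_nonneg (by linarith : (0:ℝ) ≤ t)]
        have h3' : ‖u‖ + ‖w‖ ≤ t * ‖v‖ := by
          have hq : (‖u‖ + ‖w‖) / ‖v‖ ≤ t := le_trans (le_max_right _ _) ht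
          rw [div_le_iff₀ hvpos] at hq
          nlinarith
        linarith
      have hz0eq : A ((X^m - C ((w - (t:ℂ) * v) / u)) * (X^n - C ((t:ℂ)))) z0 = 0 := by
        rw [hAexp m n _ _ z0 hz0b, ← hu, ← hv, ← hw]
        linear_combination -hau
      intro z hz
      rcases hstab _ (hstable m n _ _ hm hn hanorm hbnorm) with hL | hR
      · have hthis := hL z hz
        rw [hAexp m n _ _ z hz] at hthis
        exact hthis
      · exact absurd hz0eq (hR z0 hz0)
    obtain ⟨a1, ha1, he1⟩ := key T le_rfl
    obtain ⟨a2, ha2, he2⟩ := key (T + 1) (by linarith)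
    have hcast : ((T + 1 : ℝ) : ℂ) = (T:ℂ) + 1 := by push_cast; ring
    rw [hcast] at ha2
    refine ⟨u / v, fun z hz => ?_⟩
    have e1 := he1 z hz
    have e2 := he2 z hz
    rw [hcast] at e2
    have hdiffa : (a1 - a2) * u = v := by linear_combination ha1 - ha2
    have hlin : (a2 - a1) * A (X^n) z + A (X^m) z = 0 := by linear_combination e1 - e2
    have hvN : v * A (X^n) z = u * A (X^m) z := by
      linear_combination (-(A (X^n) z)) * hdiffa - u * hlin
    field_simp
    linear_combination hvN
  -- find a nonvanishing moment
  obtain ⟨p0, z1, hz1, hp0⟩ := hA0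
  rw [hrepr] at hp0
  obtain ⟨N, hNmem, hNne⟩ := Finset.exists_ne_zero_of_sum_ne_zero hp0
  have hN1 : 1 ≤ N := by
    rcases Nat.eq_zero_or_pos N with h | h
    · exfalso
      apply hNne
      rw [h, pow_zero, h1 z1 hz1, mul_zero]
    · exact h
  have hNne' : ¬ ∀ z ∈ ball (0:ℂ) 1, A (X^N) z = 0 := by
    intro hcon
    exact hNne (by rw [hcon z1 hz1, mul_zero])
  have hc : ∀ k : ℕ, ∃ c : ℂ, ∀ z ∈ ball (0:ℂ) 1, A (X^k) z = c * A (X^N) z := by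
    intro k
    rcases Nat.eq_zero_or_pos k with h | h
    · refine ⟨0, fun z hz => ?_⟩
      rw [h, pow_zero, zero_mul]
      exact h1 z hz
    · exact hpair N k hN1 h hNne'
  choose c hcspec using hc
  refine ⟨A (X^N), hA _, fun p => ⟨∑ k ∈ p.support, p.coeff k * c k, fun z hz => ?_⟩⟩
  rw [hrepr p z, Finset.sum_mul]
  refine Finset.sum_congr rfl fun k _ => ?_
  rw [hcspec k z hz, mul_assoc]
end

section
/- Let Ω ⊆ 𝔻 be a nonempty connected open set and A : ℂ[z] → 𝒜(𝔻) linear of rank at least 2 with A(𝒫(𝔻)) ⊆ 𝒮(Ω) ∪ {0}. Write ψ_n = A(z^n). Then for each n ≥ 1: (1) if ψ_n is not a scalar multiple of ψ₀, then |ψ_n(z)| < |ψ₀(z)| for every z ∈ Ω; (2) if ψ_n = α·ψ₀ for some α ∈ ℂ, then |α| < 3. -/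
/-!
Constant perturbations turn stability questions for `A` into statements about `ψ₀ = A 1`:
for `p` without zeros in `𝔻` and `|a|` large, `p + a` has no zeros in `𝔻`, so `A p + a ψ₀`
either vanishes identically or has no zeros in `Ω`. If `ψ₀ ≡ 0` this makes every `A p` zero-free
on `Ω` or zero, which forces rank `≤ 1`; hence `ψ₀` has no zeros in `Ω`. Choosing
`a = -ψₙ(z)/ψ₀(z)` for `p = zⁿ` shows `|ψₙ(z)| < |ψ₀(z)|` unless `ψₙ ∈ ℂ ψ₀`. Rank `≥ 2` provides
some `ψₘ ∉ ℂ ψ₀`, and if `ψₙ = α ψ₀` with `|α| ≥ 3`, the stable polynomial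
`zᵐ + zⁿ + (b - α)`, `b = -ψₘ(z₀)/ψ₀(z₀)`, is mapped to `ψₘ + b ψ₀`, which vanishes at `z₀`
without vanishing identically.
-/

open Metric Polynomial

local notation "𝔻" => Metric.ball (0 : ℂ) 1

namespace Polynomial

section NormedField

variable {𝕜 : Type*} [NormedField 𝕜]

theorem eval_add_C_ne_zero_of_norm_lt {p : 𝕜[X]} {a z : 𝕜} (h : ‖p.eval z‖ < ‖a‖) :
    (p + C a).eval z ≠ 0 := by
  rw [eval_add, eval_C, Ne, add_eq_zero_iff_eq_neg]
  rintro heq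
  rw [heq, norm_neg] at h
  exact h.false

theorem eval_X_pow_add_C_ne_zero {n : ℕ} (hn : n ≠ 0) {a z : 𝕜} (ha : 1 ≤ ‖a‖) (hz : ‖z‖ < 1) :
    (X ^ n + C a).eval z ≠ 0 := by
  refine eval_add_C_ne_zero_of_norm_lt ?_
  rw [eval_pow, eval_X, norm_pow]
  exact (pow_lt_one₀ (norm_nonneg z) hz hn).trans_le ha

theorem eval_X_pow_add_X_pow_add_C_ne_zero {m n : ℕ} (hm : m ≠ 0) (hn : n ≠ 0) {a z : 𝕜}
    (ha : 2 ≤ ‖a‖) (hz : ‖z‖ < 1) : (X ^ m + X ^ n + C a).eval z ≠ 0 := by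
  refine eval_add_C_ne_zero_of_norm_lt ?_
  rw [eval_add, eval_pow, eval_pow, eval_X]
  calc ‖z ^ m + z ^ n‖ ≤ ‖z‖ ^ m + ‖z‖ ^ n :=
        (norm_add_le _ _).trans_eq (by rw [norm_pow, norm_pow])
    _ < 2 := by linarith [pow_lt_one₀ (norm_nonneg z) hz hm, pow_lt_one₀ (norm_nonneg z) hz hn]
    _ ≤ ‖a‖ := ha

end NormedField

theorem exists_eval_add_C_ne_zero {s : Set ℂ} (hs : Bornology.IsBounded s) (p : ℂ[X]) :
    ∃ c : ℂ, ∀ z ∈ s, (p + C c).eval z ≠ 0 := by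
  obtain ⟨M, hM⟩ := hs.isCompact_closure.exists_bound_of_continuousOn p.continuous.continuousOn
  refine ⟨(|M| + 1 : ℝ), fun z hz => eval_add_C_ne_zero_of_norm_lt ?_⟩
  rw [Complex.norm_real, Real.norm_of_nonneg (by positivity)]
  linarith [hM z (subset_closure hz), le_abs_self M]

end Polynomial

/-- `f ∈ 𝒮(Ω) ∪ {0}`, where `0` is the zero function on `𝔻`. -/
def StableOrZero (Ω : Set ℂ) (f : ℂ → ℂ) : Prop :=
  (∀ z ∈ 𝔻, f z = 0) ∨ ∀ z ∈ Ω, f z ≠ 0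

def IsMultipleOnDisc (f g : ℂ → ℂ) : Prop :=
  ∃ α : ℂ, ∀ z ∈ 𝔻, f z = α * g z

theorem StableOrZero.congr {Ω : Set ℂ} (hΩ : Ω ⊆ 𝔻) {f g : ℂ → ℂ} (hf : StableOrZero Ω f)
    (hfg : Set.EqOn f g 𝔻) : StableOrZero Ω g := by
  rcases hf with h | h
  · exact .inl fun z hz => hfg hz ▸ h z hz
  · exact .inr fun z hz => hfg (hΩ hz) ▸ h z hz

section StabilityPreserving

variable {Ω : Set ℂ} {A : ℂ[X] →ₗ[ℂ] (ℂ → ℂ)}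

theorem apply_add_C (p : ℂ[X]) (a z : ℂ) : A (p + C a) z = A p z + a * A 1 z := by
  rw [← mul_one (C a), C_mul', map_add, map_smul]
  rfl

theorem isMultipleOnDisc_of_forall_X_pow (g : ℂ → ℂ)
    (h : ∀ m : ℕ, IsMultipleOnDisc (A (X ^ m)) g) (p : ℂ[X]) : IsMultipleOnDisc (A p) g := by
  induction p using Polynomial.induction_on' with
  | add p q hp hq =>
    obtain ⟨α, hα⟩ := hp
    obtain ⟨β, hβ⟩ := hq
    exact ⟨α + β, fun z hz => by simp only [map_add, Pi.add_apply, hα z hz, hβ z hz]; ring⟩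
  | monomial k c =>
    obtain ⟨α, hα⟩ := h k
    refine ⟨c * α, fun z hz => ?_⟩
    rw [← C_mul_X_pow_eq_monomial, ← smul_eq_C_mul, map_smul, Pi.smul_apply, hα z hz,
      smul_eq_mul, mul_assoc]

theorem exists_X_pow_not_isMultipleOnDisc (hrank : ∃ p q : ℂ[X], ∀ c d : ℂ, (c ≠ 0 ∨ d ≠ 0) →
      ∃ z ∈ 𝔻, c * A p z + d * A q z ≠ 0) :
    ∃ m ≠ 0, ¬ IsMultipleOnDisc (A (X ^ m)) (A 1) := by
  by_contra! hall
  have hmul := isMultipleOnDisc_of_forall_X_pow (A := A) (A 1) fun m =>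
    if hm : m = 0 then ⟨1, fun z _ => by rw [hm, pow_zero, one_mul]⟩ else hall m hm
  obtain ⟨p, q, hpq⟩ := hrank
  obtain ⟨α, hα⟩ := hmul p
  obtain ⟨β, hβ⟩ := hmul q
  by_cases hα0 : α = 0
  · obtain ⟨z, hz, hne⟩ := hpq 1 0 (.inl one_ne_zero)
    exact hne (by rw [hα z hz, hα0]; ring)
  · obtain ⟨z, hz, hne⟩ := hpq β (-α) (.inr (neg_ne_zero.mpr hα0))
    exact hne (by rw [hα z hz, hβ z hz]; ring)

theorem exists_combination_eq_zero (hΩ : Ω.Nonempty) (h : ∀ p : ℂ[X], StableOrZero Ω (A p))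
    (p q : ℂ[X]) : ∃ c d : ℂ, (c ≠ 0 ∨ d ≠ 0) ∧ ∀ z ∈ 𝔻, c * A p z + d * A q z = 0 := by
  obtain ⟨w, hw⟩ := hΩ
  rcases h p with hp | hp
  · exact ⟨1, 0, .inl one_ne_zero, fun z hz => by rw [hp z hz]; ring⟩
  -- `A q w • p - A p w • q` is mapped to a function vanishing at `w ∈ Ω`.
  refine ⟨A q w, -A p w, .inr (neg_ne_zero.mpr (hp w hw)), ?_⟩
  have hcomb (z : ℂ) : A (A q w • p + (-A p w) • q) z = A q w * A p z + -A p w * A q z := by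
    simp only [map_add, map_smul, Pi.add_apply, Pi.smul_apply, smul_eq_mul]
  rcases h (A q w • p + (-A p w) • q) with hzero | hne
  · exact fun z hz => (hcomb z).symm.trans (hzero z hz)
  · exact absurd (by rw [hcomb]; ring) (hne w hw)

variable (hstab : ∀ p : ℂ[X], (∀ z ∈ 𝔻, p.eval z ≠ 0) → StableOrZero Ω (A p))
include hstab

theorem isMultipleOnDisc_or_apply_ne {p : ℂ[X]} {a : ℂ} (hp : ∀ z ∈ 𝔻, (p + C a).eval z ≠ 0) :
    IsMultipleOnDisc (A p) (A 1) ∨ ∀ z ∈ Ω, A p z ≠ -a * A 1 z := by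
  refine (hstab _ hp).imp (fun h => ⟨-a, fun z hz => ?_⟩) (fun h z hz heq => h z hz ?_)
  · linear_combination (apply_add_C p a z).symm.trans (h z hz)
  · rw [apply_add_C, heq]; ring

theorem stableOrZero_of_apply_one_eq_zero (hΩ : Ω ⊆ 𝔻) (h₀ : ∀ z ∈ 𝔻, A 1 z = 0) (p : ℂ[X]) :
    StableOrZero Ω (A p) := by
  obtain ⟨c, hc⟩ := exists_eval_add_C_ne_zero isBounded_ball p
  refine (hstab _ hc).congr hΩ fun z hz => ?_
  rw [apply_add_C, h₀ z hz, mul_zero, add_zero]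

theorem norm_apply_X_pow_lt {m : ℕ} (hm : m ≠ 0) (hnot : ¬ IsMultipleOnDisc (A (X ^ m)) (A 1))
    {z : ℂ} (hz : z ∈ Ω) (h₁ : A 1 z ≠ 0) : ‖A (X ^ m) z‖ < ‖A 1 z‖ := by
  by_contra! hge
  set a := -(A (X ^ m) z / A 1 z)
  have ha : 1 ≤ ‖a‖ := by
    rw [norm_neg, norm_div, one_le_div (norm_pos_iff.mpr h₁)]
    exact hge
  rcases isMultipleOnDisc_or_apply_ne hstab
    (fun w hw => eval_X_pow_add_C_ne_zero hm ha (mem_ball_zero_iff.mp hw)) with h | h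
  · exact hnot h
  · exact h z hz (by rw [neg_neg, div_mul_cancel₀ _ h₁])

theorem norm_lt_three_of_isMultipleOnDisc (hΩ : Ω ⊆ 𝔻) {m n : ℕ} (hm : m ≠ 0) (hn : n ≠ 0)
    (hnot : ¬ IsMultipleOnDisc (A (X ^ m)) (A 1)) {z : ℂ} (hz : z ∈ Ω) (h₁ : A 1 z ≠ 0) {α : ℂ}
    (hα : ∀ w ∈ 𝔻, A (X ^ n) w = α * A 1 w) : ‖α‖ < 3 := by
  by_contra! h3
  set b := -(A (X ^ m) z / A 1 z)
  have hb : ‖b‖ < 1 := by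
    rw [norm_neg, norm_div, div_lt_one (norm_pos_iff.mpr h₁)]
    exact norm_apply_X_pow_lt hstab hm hnot hz h₁
  have hba : 2 ≤ ‖b - α‖ := by linarith [norm_sub_norm_le α b, norm_sub_rev α b]
  have happ (w : ℂ) (hw : w ∈ 𝔻) : A (X ^ m + X ^ n) w = A (X ^ m) w + α * A 1 w := by
    rw [map_add, Pi.add_apply, hα w hw]
  rcases isMultipleOnDisc_or_apply_ne hstab (a := b - α)
    (fun w hw => eval_X_pow_add_X_pow_add_C_ne_zero hm hn hba (mem_ball_zero_iff.mp hw))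
    with ⟨β, hβ⟩ | h
  · exact hnot ⟨β - α, fun w hw => by linear_combination (happ w hw).symm.trans (hβ w hw)⟩
  · exact h z hz (by rw [happ z (hΩ hz), neg_sub, sub_mul, neg_mul, div_mul_cancel₀ _ h₁]; ring)

theorem apply_one_ne_zero (hrank : ∃ p q : ℂ[X], ∀ c d : ℂ, (c ≠ 0 ∨ d ≠ 0) →
      ∃ z ∈ 𝔻, c * A p z + d * A q z ≠ 0)
    (hΩsub : Ω ⊆ 𝔻) (hΩne : Ω.Nonempty) : ∀ z ∈ Ω, A 1 z ≠ 0 := by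
  refine (hstab 1 fun z _ => by simp).resolve_left fun h₀ => ?_
  obtain ⟨p, q, hpq⟩ := hrank
  obtain ⟨c, d, hcd, hzero⟩ :=
    exists_combination_eq_zero hΩne (stableOrZero_of_apply_one_eq_zero hstab hΩsub h₀) p q
  obtain ⟨z, hz, hne⟩ := hpq c d hcd
  exact hne (hzero z hz)

end StabilityPreserving

theorem stmt_15_general (Ω : Set ℂ) (hΩsub : Ω ⊆ ball (0:ℂ) 1) (hΩne : Ω.Nonempty)
    (A : Polynomial ℂ →ₗ[ℂ] (ℂ → ℂ))
    (hstab : ∀ p : Polynomial ℂ, (∀ z ∈ ball (0:ℂ) 1, Polynomial.eval z p ≠ 0) →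
      ((∀ z ∈ ball (0:ℂ) 1, A p z = 0) ∨ (∀ z ∈ Ω, A p z ≠ 0)))
    (hrank2 : ∃ p q : Polynomial ℂ, ∀ c d : ℂ, (c ≠ 0 ∨ d ≠ 0) →
      ∃ z ∈ ball (0:ℂ) 1, c * A p z + d * A q z ≠ 0) :
    ∀ n : ℕ, 1 ≤ n →
      ((¬ ∃ α : ℂ, ∀ z ∈ ball (0:ℂ) 1, A (X ^ n) z = α * A 1 z) →
        ∀ z ∈ Ω, ‖A (X ^ n) z‖ < ‖A 1 z‖) ∧
      (∀ α : ℂ, (∀ z ∈ ball (0:ℂ) 1, A (X ^ n) z = α * A 1 z) → ‖α‖ < 3) := by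
  intro n hn
  have hψ₀ := apply_one_ne_zero hstab hrank2 hΩsub hΩne
  obtain ⟨m, hm, hnot⟩ := exists_X_pow_not_isMultipleOnDisc hrank2
  obtain ⟨z₀, hz₀⟩ := hΩne
  have hn₀ : n ≠ 0 := Nat.one_le_iff_ne_zero.mp hn
  exact ⟨fun h z hz => norm_apply_X_pow_lt hstab hn₀ h hz (hψ₀ z hz), fun α hα =>
    norm_lt_three_of_isMultipleOnDisc hstab hΩsub hm hn₀ hnot hz₀ (hψ₀ z₀ hz₀) hα⟩

/-- Bounds on the moments ψₙ = A(zⁿ) of a stability-transforming operator of rank ≥ 2. -/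
theorem stmt_15 (Ω : Set ℂ) (hΩsub : Ω ⊆ ball (0:ℂ) 1) (hΩne : Ω.Nonempty)
    (hΩopen : IsOpen Ω) (hΩconn : IsConnected Ω)
    (A : Polynomial ℂ →ₗ[ℂ] (ℂ → ℂ))
    (hA : ∀ p : Polynomial ℂ, DifferentiableOn ℂ (A p) (ball (0:ℂ) 1))
    (hstab : ∀ p : Polynomial ℂ, (∀ z ∈ ball (0:ℂ) 1, Polynomial.eval z p ≠ 0) →
      ((∀ z ∈ ball (0:ℂ) 1, A p z = 0) ∨ (∀ z ∈ Ω, A p z ≠ 0)))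
    (hrank2 : ∃ p q : Polynomial ℂ, ∀ c d : ℂ, (c ≠ 0 ∨ d ≠ 0) →
      ∃ z ∈ ball (0:ℂ) 1, c * A p z + d * A q z ≠ 0) :
    ∀ n : ℕ, 1 ≤ n →
      ((¬ ∃ α : ℂ, ∀ z ∈ ball (0:ℂ) 1, A (X ^ n) z = α * A 1 z) →
        ∀ z ∈ Ω, ‖A (X ^ n) z‖ < ‖A 1 z‖) ∧
      (∀ α : ℂ, (∀ z ∈ ball (0:ℂ) 1, A (X ^ n) z = α * A 1 z) → ‖α‖ < 3) :=
  stmt_15_general Ω hΩsub hΩne A hstab hrank2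
end
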